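/- Let 𝒮_∞ = Σ_{x∈ℤ} ν̃(x) δ_{T_x ω̃} be the random probability measure built from the infinite valley Ṽ, and let 𝔖 be its expectation over the law of Ṽ, i.e. ∫ F d𝔖 = Σ_x E[ν̃(x) F(T_x ω̃)]. Then 𝔖 is invariant and reversible for the Markov kernel R(ω, dω') = ω(0)δ_{T_1ω}(dω') + (1−ω(0))δ_{T_{−1}ω}(dω') on Ω. -/

import Mathlib

open MeasureTheory

/-- Environments. -/
abbrev Env : Type := ℤ → ℝ

/-- Shift of the environment by `x`. -/
def envShift (x : ℤ) (ω : Env) : Env := fun y => ω (x + y)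

/-- The kernel `R` acting on functions:
`R F (ω) = ω(0) F(T₁ ω) + (1-ω(0)) F(T₋₁ ω)`. -/
noncomputable def kernelR (F : Env → ℝ) (ω : Env) : ℝ :=
  ω 0 * F (envShift 1 ω) + (1 - ω 0) * F (envShift (-1) ω)

/-- Infinite-valley environment built from a potential. -/
noncomputable def omegaTilde (V : ℤ → ℝ) : Env := fun x =>
  Real.exp (-V x) / (Real.exp (-V x) + Real.exp (-V (x-1)))

/-- The stationary measure of the walk in the infinite valley. -/
noncomputable def nuTilde (V : ℤ → ℝ) (x : ℤ) : ℝ :=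
  (Real.exp (-V (x-1)) + Real.exp (-V x)) / (2 * ∑' z : ℤ, Real.exp (-V z))

lemma envShift_shift (a b : ℤ) (ω : Env) :
    envShift a (envShift b ω) = envShift (b + a) ω := by
  funext y; simp [envShift, add_assoc]

lemma summ_aux {e : ℤ → ℝ} (he : Summable e) (hp : ∀ x, 0 ≤ e x)
    {h : ℤ → ℝ} {C : ℝ} (hb : ∀ x, |h x| ≤ C) : Summable fun x => e x * h x := by
  refine Summable.of_norm_bounded (he.mul_right C) ?_
  intro x
  rw [norm_mul, Real.norm_eq_abs, Real.norm_eq_abs, abs_of_nonneg (hp x)]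
  exact mul_le_mul_of_nonneg_left (hb x) (hp x)

section Key
variable (V : ℤ → ℝ)

/-- coefficient `a x = e^{-V x} / (2S)` -/
noncomputable def coefA (x : ℤ) : ℝ :=
  Real.exp (-V x) / (2 * ∑' z : ℤ, Real.exp (-V z))

lemma coefA_nonneg (x : ℤ) : 0 ≤ coefA V x := by
  unfold coefA
  refine div_nonneg (Real.exp_pos _).le ?_
  refine mul_nonneg (by norm_num) (tsum_nonneg fun z => (Real.exp_pos _).le)

lemma coefA_summable (hs : Summable fun x : ℤ => Real.exp (-(V x))) :
    Summable (coefA V) := hs.div_const _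

lemma coefA_summable' (hs : Summable fun x : ℤ => Real.exp (-(V x))) :
    Summable (fun x => coefA V (x - 1)) :=
  (coefA_summable V hs).comp_injective sub_left_injective

lemma Spos (hs : Summable fun x : ℤ => Real.exp (-(V x))) :
    0 < ∑' z : ℤ, Real.exp (-V z) :=
  Summable.tsum_pos hs (fun z => (Real.exp_pos _).le) 0 (Real.exp_pos _)

lemma nu_mul_omega (hs : Summable fun x : ℤ => Real.exp (-(V x))) (x : ℤ) :
    nuTilde V x * omegaTilde V x = coefA V x := by
  have hS := Spos V hs
  have hd : Real.exp (-V x) + Real.exp (-V (x-1)) ≠ 0 := by positivity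
  unfold nuTilde omegaTilde coefA
  field_simp
  ring

lemma nu_mul_omega' (hs : Summable fun x : ℤ => Real.exp (-(V x))) (x : ℤ) :
    nuTilde V x * (1 - omegaTilde V x) = coefA V (x - 1) := by
  have hS := Spos V hs
  have hd : Real.exp (-V x) + Real.exp (-V (x-1)) ≠ 0 := by positivity
  unfold nuTilde omegaTilde coefA
  field_simp
  ring

lemma nu_eq (x : ℤ) : nuTilde V x = coefA V (x - 1) + coefA V x := by
  unfold nuTilde coefA
  rw [add_div]

end Key

lemma invariance_pt (V : ℤ → ℝ) (hs : Summable fun x : ℤ => Real.exp (-(V x)))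
    (F : Env → ℝ) (C : ℝ) (hC : ∀ ω, |F ω| ≤ C) :
    ∑' x : ℤ, nuTilde V x * kernelR F (envShift x (omegaTilde V))
      = ∑' x : ℤ, nuTilde V x * F (envShift x (omegaTilde V)) := by
  set ω : Env := omegaTilde V with hω
  have hterm : ∀ x : ℤ, nuTilde V x * kernelR F (envShift x ω)
      = coefA V x * F (envShift (x+1) ω) + coefA V (x-1) * F (envShift (x-1) ω) := by
    intro x
    have h1 : envShift 1 (envShift x ω) = envShift (x+1) ω := envShift_shift 1 x ω
    have h2 : envShift (-1) (envShift x ω) = envShift (x-1) ω := by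
      rw [envShift_shift]; norm_num [sub_eq_add_neg]
    have h0 : envShift x ω 0 = omegaTilde V x := by simp [envShift, hω]
    rw [kernelR, h1, h2, h0, mul_add, ← mul_assoc, ← mul_assoc,
      nu_mul_omega V hs x, nu_mul_omega' V hs x]
  have s1 : Summable fun x : ℤ => coefA V x * F (envShift (x+1) ω) :=
    summ_aux (coefA_summable V hs) (coefA_nonneg V) (fun x => hC _)
  have s2 : Summable fun x : ℤ => coefA V (x-1) * F (envShift (x-1) ω) :=
    summ_aux (coefA_summable' V hs) (fun x => coefA_nonneg V _) (fun x => hC _)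
  have s3 : Summable fun x : ℤ => coefA V (x-1) * F (envShift x ω) :=
    summ_aux (coefA_summable' V hs) (fun x => coefA_nonneg V _) (fun x => hC _)
  have s4 : Summable fun x : ℤ => coefA V x * F (envShift x ω) :=
    summ_aux (coefA_summable V hs) (coefA_nonneg V) (fun x => hC _)
  have r1 : ∑' x : ℤ, coefA V x * F (envShift (x+1) ω)
      = ∑' x : ℤ, coefA V (x-1) * F (envShift x ω) := by
    rw [← (Equiv.addRight (1:ℤ)).tsum_eq (fun y => coefA V (y-1) * F (envShift y ω))]
    exact tsum_congr fun x => by simp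
  have r2 : ∑' x : ℤ, coefA V (x-1) * F (envShift (x-1) ω)
      = ∑' x : ℤ, coefA V x * F (envShift x ω) := by
    rw [← (Equiv.subRight (1:ℤ)).tsum_eq (fun y => coefA V y * F (envShift y ω))]
    exact tsum_congr fun x => by simp
  calc ∑' x : ℤ, nuTilde V x * kernelR F (envShift x ω)
      = ∑' x : ℤ, (coefA V x * F (envShift (x+1) ω)
          + coefA V (x-1) * F (envShift (x-1) ω)) := tsum_congr hterm
    _ = (∑' x : ℤ, coefA V x * F (envShift (x+1) ω))
          + ∑' x : ℤ, coefA V (x-1) * F (envShift (x-1) ω) := Summable.tsum_add s1 s2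
    _ = (∑' x : ℤ, coefA V (x-1) * F (envShift x ω))
          + ∑' x : ℤ, coefA V x * F (envShift x ω) := by rw [r1, r2]
    _ = ∑' x : ℤ, (coefA V (x-1) * F (envShift x ω)
          + coefA V x * F (envShift x ω)) := (Summable.tsum_add s3 s4).symm
    _ = ∑' x : ℤ, nuTilde V x * F (envShift x ω) :=
        tsum_congr fun x => by rw [nu_eq V x]; ring

lemma reversible_pt (V : ℤ → ℝ) (hs : Summable fun x : ℤ => Real.exp (-(V x)))
    (F G : Env → ℝ) (C D : ℝ) (hC : ∀ ω, |F ω| ≤ C) (hD : ∀ ω, |G ω| ≤ D) :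
    ∑' x : ℤ, nuTilde V x *
        (F (envShift x (omegaTilde V)) *
          (omegaTilde V x * G (envShift (x+1) (omegaTilde V)) +
           (1 - omegaTilde V x) * G (envShift (x-1) (omegaTilde V))))
      = ∑' x : ℤ, nuTilde V x *
        (G (envShift x (omegaTilde V)) *
          (omegaTilde V x * F (envShift (x+1) (omegaTilde V)) +
           (1 - omegaTilde V x) * F (envShift (x-1) (omegaTilde V)))) := by
  set ω : Env := omegaTilde V with hω
  have hC0 : 0 ≤ C := le_trans (abs_nonneg _) (hC (fun _ => 0))
  have hD0 : 0 ≤ D := le_trans (abs_nonneg _) (hD (fun _ => 0))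
  have hbnd : ∀ (ω₁ ω₂ : Env), |F ω₁ * G ω₂| ≤ C * D := fun ω₁ ω₂ => by
    rw [abs_mul]
    exact mul_le_mul (hC _) (hD _) (abs_nonneg _) hC0
  have hbnd2 : ∀ (ω₁ ω₂ : Env), |G ω₁ * F ω₂| ≤ D * C := fun ω₁ ω₂ => by
    rw [abs_mul]
    exact mul_le_mul (hD _) (hC _) (abs_nonneg _) hD0
  have hterm : ∀ (H K : Env → ℝ) (x : ℤ), nuTilde V x *
      (H (envShift x ω) * (omegaTilde V x * K (envShift (x+1) ω) +
        (1 - omegaTilde V x) * K (envShift (x-1) ω)))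
      = coefA V x * (H (envShift x ω) * K (envShift (x+1) ω))
        + coefA V (x-1) * (H (envShift x ω) * K (envShift (x-1) ω)) := by
    intro H K x
    rw [← nu_mul_omega V hs x, ← nu_mul_omega' V hs x]
    ring
  have sA : Summable fun x : ℤ => coefA V x * (F (envShift x ω) * G (envShift (x+1) ω)) :=
    summ_aux (coefA_summable V hs) (coefA_nonneg V) (fun x => hbnd _ _)
  have sB : Summable fun x : ℤ => coefA V (x-1) * (F (envShift x ω) * G (envShift (x-1) ω)) :=
    summ_aux (coefA_summable' V hs) (fun x => coefA_nonneg V _) (fun x => hbnd _ _)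
  have sA' : Summable fun x : ℤ => coefA V x * (G (envShift x ω) * F (envShift (x+1) ω)) :=
    summ_aux (coefA_summable V hs) (coefA_nonneg V) (fun x => hbnd2 _ _)
  have sB' : Summable fun x : ℤ => coefA V (x-1) * (G (envShift x ω) * F (envShift (x-1) ω)) :=
    summ_aux (coefA_summable' V hs) (fun x => coefA_nonneg V _) (fun x => hbnd2 _ _)
  have rAB' : ∑' x : ℤ, coefA V x * (F (envShift x ω) * G (envShift (x+1) ω))
      = ∑' x : ℤ, coefA V (x-1) * (G (envShift x ω) * F (envShift (x-1) ω)) := by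
    rw [← (Equiv.addRight (1:ℤ)).tsum_eq
      (fun y => coefA V (y-1) * (G (envShift y ω) * F (envShift (y-1) ω)))]
    refine tsum_congr fun x => ?_
    simp only [Equiv.coe_addRight, add_sub_cancel_right]
    ring
  have rBA' : ∑' x : ℤ, coefA V (x-1) * (F (envShift x ω) * G (envShift (x-1) ω))
      = ∑' x : ℤ, coefA V x * (G (envShift x ω) * F (envShift (x+1) ω)) := by
    rw [← (Equiv.subRight (1:ℤ)).tsum_eq
      (fun y => coefA V y * (G (envShift y ω) * F (envShift (y+1) ω)))]
    refine tsum_congr fun x => ?_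
    simp only [Equiv.subRight_apply, sub_add_cancel]
    ring
  calc ∑' x : ℤ, nuTilde V x * (F (envShift x ω) * (omegaTilde V x * G (envShift (x+1) ω)
          + (1 - omegaTilde V x) * G (envShift (x-1) ω)))
      = ∑' x : ℤ, (coefA V x * (F (envShift x ω) * G (envShift (x+1) ω))
          + coefA V (x-1) * (F (envShift x ω) * G (envShift (x-1) ω))) :=
        tsum_congr (hterm F G)
    _ = (∑' x : ℤ, coefA V x * (F (envShift x ω) * G (envShift (x+1) ω)))
          + ∑' x : ℤ, coefA V (x-1) * (F (envShift x ω) * G (envShift (x-1) ω)) :=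
        Summable.tsum_add sA sB
    _ = (∑' x : ℤ, coefA V (x-1) * (G (envShift x ω) * F (envShift (x-1) ω)))
          + ∑' x : ℤ, coefA V x * (G (envShift x ω) * F (envShift (x+1) ω)) := by
        rw [rAB', rBA']
    _ = (∑' x : ℤ, coefA V x * (G (envShift x ω) * F (envShift (x+1) ω)))
          + ∑' x : ℤ, coefA V (x-1) * (G (envShift x ω) * F (envShift (x-1) ω)) :=
        add_comm _ _
    _ = ∑' x : ℤ, (coefA V x * (G (envShift x ω) * F (envShift (x+1) ω))
          + coefA V (x-1) * (G (envShift x ω) * F (envShift (x-1) ω))) :=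
        (Summable.tsum_add sA' sB').symm
    _ = ∑' x : ℤ, nuTilde V x * (G (envShift x ω) * (omegaTilde V x * F (envShift (x+1) ω)
          + (1 - omegaTilde V x) * F (envShift (x-1) ω))) :=
        (tsum_congr (hterm G F)).symm

/-- Let `Ṽ` be the infinite valley (positive on negative sites,
nonnegative on nonnegative sites, with `∑_x e^{-Ṽ(x)} < ∞` a.s.), defined on a
probability space `(Θ, Q)`.  The measure `𝔖` on `Ω`, defined by
`∫ F d𝔖 = E[∑_x ν̃(x) F(T_x ω̃)]`, is invariant and reversible for the kernel `R`:
for all bounded measurable `F, G`,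
`∫ R F d𝔖 = ∫ F d𝔖` and `𝔼 F(ω̄₀) G(ω̄₁) = 𝔼 F(ω̄₁) G(ω̄₀)` when `ω̄₀ ∼ 𝔖` and one
step of `R` is taken. -/
theorem Sfrak_invariant_reversible
    {Θ : Type*} [m : MeasurableSpace Θ] (Q : Measure Θ) [IsProbabilityMeasure Q]
    (Vt : Θ → ℤ → ℝ) (hmeas : Measurable Vt)
    (hpos : ∀ θ, ∀ x : ℤ, x < 0 → 0 < Vt θ x)
    (hnonneg : ∀ θ, ∀ x : ℤ, 0 ≤ x → 0 ≤ Vt θ x)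
    (hsum : ∀ θ, Summable fun x : ℤ => Real.exp (-(Vt θ x))) :
    (∀ F : Env → ℝ, Measurable F → (∃ C, ∀ ω, |F ω| ≤ C) →
      ∫ θ, ∑' x : ℤ, nuTilde (Vt θ) x * kernelR F (envShift x (omegaTilde (Vt θ))) ∂Q
        = ∫ θ, ∑' x : ℤ, nuTilde (Vt θ) x * F (envShift x (omegaTilde (Vt θ))) ∂Q) ∧
    (∀ F G : Env → ℝ, Measurable F → Measurable G →
      (∃ C, ∀ ω, |F ω| ≤ C) → (∃ C, ∀ ω, |G ω| ≤ C) →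
      ∫ θ, ∑' x : ℤ, nuTilde (Vt θ) x *
          (F (envShift x (omegaTilde (Vt θ))) *
            (omegaTilde (Vt θ) x * G (envShift (x+1) (omegaTilde (Vt θ))) +
             (1 - omegaTilde (Vt θ) x) * G (envShift (x-1) (omegaTilde (Vt θ))))) ∂Q
        = ∫ θ, ∑' x : ℤ, nuTilde (Vt θ) x *
          (G (envShift x (omegaTilde (Vt θ))) *
            (omegaTilde (Vt θ) x * F (envShift (x+1) (omegaTilde (Vt θ))) +
             (1 - omegaTilde (Vt θ) x) * F (envShift (x-1) (omegaTilde (Vt θ))))) ∂Q) := by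
  constructor
  · rintro F _ ⟨C, hC⟩
    exact integral_congr_ae (Filter.Eventually.of_forall fun θ =>
      invariance_pt (Vt θ) (hsum θ) F C hC)
  · rintro F G _ _ ⟨C, hC⟩ ⟨D, hD⟩
    exact integral_congr_ae (Filter.Eventually.of_forall fun θ =>
      reversible_pt (Vt θ) (hsum θ) F G C D hC hD)
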